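/- For every positive integer n and every even positive integer d, the automaton R_{n,d} rejects all words in LimsupOdd_{n,d}: for every infinite word w over Σ_{n,d} in which the largest priority occurring infinitely often is odd, every run of R_{n,d} reading w is rejecting. -/

import Mathlib

/-
If the largest priority read infinitely often is the odd `p` and the run were accepting with
largest priority `2k`, then from some point on all letters have priority `≤ p` and the run emits
nothing above `2k`. Each `k`-reset shifts the registers below `k` up by one and puts a `1` at the
bottom, so after `k` further resets the bottom `k` registers all hold values `≤ p`, and stay so.
The next letter of priority `p` sets register `k` to exactly `p`, and from then on it stays `p`:
updates can neither lower it nor raise it above `p`, resets of lower registers leave it alone,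
and a `k`-reset would now be odd and emit `2k + 1`. So `2k` is emitted only finitely often.
-/

namespace PGSep

/-- Letters of the alphabet `Σ_{n,d}`: triples (source node, priority, target node). -/
abbrev Letter : Type := ℕ × ℕ × ℕ

/-- The priority component of a letter. -/
def prio (e : Letter) : ℕ := e.2.1

/-- Membership in the alphabet `Σ_{n,d} = {1,…,n} × {1,…,d} × {1,…,n}`. -/
def InAlph (n d : ℕ) (e : Letter) : Prop :=
  1 ≤ e.1 ∧ e.1 ≤ n ∧ 1 ≤ e.2.1 ∧ e.2.1 ≤ d ∧ 1 ≤ e.2.2 ∧ e.2.2 ≤ n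

/-- Infinite words over the alphabet. -/
abbrev Word : Type := ℕ → Letter

/-- `p` occurs infinitely often among the values of `f`. -/
def InfOft (f : ℕ → ℕ) (p : ℕ) : Prop := ∀ N, ∃ k, N ≤ k ∧ f k = p

/-- The largest value occurring infinitely often in `f` exists and is even. -/
def MaxInfOftEven (f : ℕ → ℕ) : Prop :=
  ∃ p, Even p ∧ InfOft f p ∧ ∀ q, InfOft f q → q ≤ p

/-- The largest value occurring infinitely often in `f` exists and is odd. -/
def MaxInfOftOdd (f : ℕ → ℕ) : Prop :=
  ∃ p, Odd p ∧ InfOft f p ∧ ∀ q, InfOft f q → q ≤ p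

/-- `LimsupEven_{n,d}`: the largest priority occurring infinitely often is even. -/
def LimsupEven (w : Word) : Prop := MaxInfOftEven fun k => prio (w k)

/-- `LimsupOdd_{n,d}`: the largest priority occurring infinitely often is odd. -/
def LimsupOdd (w : Word) : Prop := MaxInfOftOdd fun k => prio (w k)

/-- An infinite sequence of triples is a path in the edge set `E`. -/
def IsPathSeq {V : Type*} (E : Set (V × ℕ × V)) (w : ℕ → V × ℕ × V) : Prop :=
  ∀ k, w k ∈ E ∧ (w k).2.2 = (w (k + 1)).1

/-- A game graph with `n` nodes (the set {1,…,n}) and priorities up to `d`. -/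
structure GameGraph (n d : ℕ) where
  /-- nodes owned by Even (V_□) -/
  evenN : Set ℕ
  /-- nodes owned by Odd (V_△) -/
  oddN : Set ℕ
  /-- the starting node -/
  start : ℕ
  /-- the set of edges (a subset of the alphabet) -/
  edges : Set Letter
  union_eq : evenN ∪ oddN = Set.Icc 1 n
  disj : Disjoint evenN oddN
  start_mem : start ∈ Set.Icc 1 n
  edges_alph : ∀ e ∈ edges, InAlph n d e
  total : ∀ v ∈ Set.Icc (1 : ℕ) n, ∃ e ∈ edges, e.1 = v

/-- A play in a game graph: an infinite path starting at the starting node,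
identified with the word listing its consecutive edges. -/
def IsPlay {n d : ℕ} (G : GameGraph n d) (w : Word) : Prop :=
  (w 0).1 = G.start ∧ IsPathSeq G.edges w

/-- A positional strategy for Even: one outgoing edge for each node of `V_□`. -/
structure EPosStrat {n d : ℕ} (G : GameGraph n d) where
  choice : ℕ → Letter
  mem : ∀ v ∈ G.evenN, choice v ∈ G.edges ∧ (choice v).1 = v

/-- A positional strategy for Odd: one outgoing edge for each node of `V_△`. -/
structure OPosStrat {n d : ℕ} (G : GameGraph n d) where
  choice : ℕ → Letter
  mem : ∀ v ∈ G.oddN, choice v ∈ G.edges ∧ (choice v).1 = v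

/-- A play arises from a positional strategy of Even. -/
def ArisesE {n d : ℕ} {G : GameGraph n d} (τ : EPosStrat G) (w : Word) : Prop :=
  IsPlay G w ∧ ∀ k, (w k).1 ∈ G.evenN → w k = τ.choice (w k).1

/-- A play arises from a positional strategy of Odd. -/
def ArisesO {n d : ℕ} {G : GameGraph n d} (τ : OPosStrat G) (w : Word) : Prop :=
  IsPlay G w ∧ ∀ k, (w k).1 ∈ G.oddN → w k = τ.choice (w k).1

/-- A positional strategy for Even is winning: every arising play is won by Even. -/
def EWinningPos {n d : ℕ} {G : GameGraph n d} (τ : EPosStrat G) : Prop :=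
  ∀ w, ArisesE τ w → LimsupEven w

/-- A positional strategy for Odd is winning: every arising play is won by Odd
(i.e. not won by Even). -/
def OWinningPos {n d : ℕ} {G : GameGraph n d} (τ : OPosStrat G) : Prop :=
  ∀ w, ArisesO τ w → ¬ LimsupEven w

/-- `PosEven_{n,d}`: plays arising from positional winning strategies for Even. -/
def PosEven (n d : ℕ) : Set Word :=
  {w | ∃ G : GameGraph n d, ∃ τ : EPosStrat G, EWinningPos τ ∧ ArisesE τ w}

/-- `PosOdd_{n,d}`: plays arising from positional winning strategies for Odd. -/
def PosOdd (n d : ℕ) : Set Word :=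
  {w | ∃ G : GameGraph n d, ∃ τ : OPosStrat G, OWinningPos τ ∧ ArisesO τ w}

/-- A nondeterministic automaton reading letters, with state space `Q`. -/
structure Automaton (Q : Type*) where
  init : Q
  trans : Set (Q × Letter × ℕ × Q)

/-- Transitions: (source state, letter, emitted priority, target state). -/
abbrev Trans (Q : Type*) : Type _ := Q × Letter × ℕ × Q

def tSrc {Q : Type*} (t : Trans Q) : Q := t.1
def tLetter {Q : Type*} (t : Trans Q) : Letter := t.2.1
def tPrio {Q : Type*} (t : Trans Q) : ℕ := t.2.2.1
def tTgt {Q : Type*} (t : Trans Q) : Q := t.2.2.2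

/-- `A` is a (total) nondeterministic parity automaton over `Σ_{n,d}` with
transition priorities in `{1,…,d'}`. -/
def IsParityAutomaton (n d d' : ℕ) {Q : Type*} (A : Automaton Q) : Prop :=
  (∀ t ∈ A.trans, InAlph n d (tLetter t) ∧ 1 ≤ tPrio t ∧ tPrio t ≤ d') ∧
  (∀ (s : Q) (e : Letter), InAlph n d e → ∃ p s', (s, e, p, s') ∈ A.trans)

/-- A run of the automaton: an infinite path of transitions starting at `init`. -/
def IsRun {Q : Type*} (A : Automaton Q) (ρ : ℕ → Trans Q) : Prop :=
  tSrc (ρ 0) = A.init ∧ ∀ k, ρ k ∈ A.trans ∧ tTgt (ρ k) = tSrc (ρ (k + 1))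

/-- The run `ρ` reads the word `w`. -/
def Reads {Q : Type*} (ρ : ℕ → Trans Q) (w : Word) : Prop := ∀ k, tLetter (ρ k) = w k

/-- A run is accepting: the largest priority labelling infinitely many
of its transitions is even. -/
def Accepting {Q : Type*} (ρ : ℕ → Trans Q) : Prop := MaxInfOftEven fun k => tPrio (ρ k)

/-- The language of the automaton. -/
def Lang {Q : Type*} (A : Automaton Q) : Set Word :=
  {w | ∃ ρ, IsRun A ρ ∧ Reads ρ w ∧ Accepting ρ}

/-- A transition strategy for `A`, resolving nondeterminism based on the word read
so far, the current state, and the next letter. -/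
structure TransStrat (n d : ℕ) {Q : Type*} (A : Automaton Q) where
  app : List Letter → Q → Letter → Trans Q
  valid : ∀ w s e, InAlph n d e →
    app w s e ∈ A.trans ∧ tSrc (app w s e) = s ∧ tLetter (app w s e) = e

/-- The state reached after reading the first `k` letters of `w` following `σ`. -/
def stateAt {n d : ℕ} {Q : Type*} (A : Automaton Q) (σ : TransStrat n d A) (w : Word) :
    ℕ → Q
  | 0 => A.init
  | k + 1 => tTgt (σ.app ((List.range k).map w) (stateAt A σ w k) (w k))

/-- The run obtained by following the transition strategy `σ` while reading `w`. -/
def followRun {n d : ℕ} {Q : Type*} (A : Automaton Q) (σ : TransStrat n d A) (w : Word)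
    (k : ℕ) : Trans Q :=
  σ.app ((List.range k).map w) (stateAt A σ w k) (w k)

/-- The transition strategy `σ` is winning for the set of words `L`. -/
def WinningFor {n d : ℕ} {Q : Type*} (A : Automaton Q) (σ : TransStrat n d A)
    (L : Set Word) : Prop :=
  ∀ w ∈ L, Accepting (followRun A σ w)

/-- `A` is good for games: some transition strategy is winning for the whole `L(A)`. -/
def GFG (n d : ℕ) {Q : Type*} (A : Automaton Q) : Prop :=
  ∃ σ : TransStrat n d A, WinningFor A σ (Lang A)

/-- `A` is a parity-games separator. -/
def PGSeparator (n d : ℕ) {Q : Type*} (A : Automaton Q) : Prop :=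
  (∀ w ∈ PosEven n d, w ∈ Lang A) ∧ ∀ w ∈ PosOdd n d, w ∉ Lang A

/-- `A` is a strong PG separator: additionally it rejects all of `LimsupOdd`. -/
def StrongPGSeparator (n d : ℕ) {Q : Type*} (A : Automaton Q) : Prop :=
  PGSeparator n d A ∧ ∀ w : Word, LimsupOdd w → w ∉ Lang A

/-- `A` is suitable for parity games (SFPG). -/
def SFPG (n d : ℕ) {Q : Type*} (A : Automaton Q) : Prop :=
  PGSeparator n d A ∧
  ∀ (G : GameGraph n d) (τ : EPosStrat G), EWinningPos τ →
    ∃ σ : TransStrat n d A, WinningFor A σ {w | ArisesE τ w}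

/-- A generic game with parity winning condition, over an arbitrary set of nodes. -/
structure PGame (V : Type*) where
  evenOwn : V → Prop
  start : V
  edges : Set (V × ℕ × V)

/-- A play of a generic game. -/
def PGame.IsPlay {V : Type*} (g : PGame V) (w : ℕ → V × ℕ × V) : Prop :=
  (w 0).1 = g.start ∧ IsPathSeq g.edges w

/-- `IsFinPath E u l v`: the list of edges `l` is a finite path from `u` to `v`. -/
def IsFinPath {V : Type*} (E : Set (V × ℕ × V)) : V → List (V × ℕ × V) → V → Prop
  | u, [], v => u = v
  | u, e :: l, v => e ∈ E ∧ e.1 = u ∧ IsFinPath E e.2.2 l v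

/-- Even has a winning strategy in the game `g`. -/
def EvenWins {V : Type*} (g : PGame V) : Prop :=
  ∃ str : List (V × ℕ × V) → V × ℕ × V,
    (∀ l v, IsFinPath g.edges g.start l v → g.evenOwn v →
      str l ∈ g.edges ∧ (str l).1 = v) ∧
    ∀ w, g.IsPlay w → (∀ k, g.evenOwn ((w k).1) → w k = str ((List.range k).map w)) →
      MaxInfOftEven fun k => (w k).2.1

/-- Odd has a winning strategy in the game `g`. -/
def OddWins {V : Type*} (g : PGame V) : Prop :=
  ∃ str : List (V × ℕ × V) → V × ℕ × V,
    (∀ l v, IsFinPath g.edges g.start l v → ¬ g.evenOwn v →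
      str l ∈ g.edges ∧ (str l).1 = v) ∧
    ∀ w, g.IsPlay w → (∀ k, ¬ g.evenOwn ((w k).1) → w k = str ((List.range k).map w)) →
      ¬ MaxInfOftEven fun k => (w k).2.1

/-- Even has a strategy winning for the safety condition `safe` in the game `g`. -/
def EvenWinsSafety {V : Type*} (g : PGame V) (safe : V → Prop) : Prop :=
  ∃ str : List (V × ℕ × V) → V × ℕ × V,
    (∀ l v, IsFinPath g.edges g.start l v → g.evenOwn v →
      str l ∈ g.edges ∧ (str l).1 = v) ∧
    ∀ w, g.IsPlay w → (∀ k, g.evenOwn ((w k).1) → w k = str ((List.range k).map w)) →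
      ∀ k, safe (w k).2.2

/-- A game graph viewed as a generic game. -/
def GameGraph.toPGame {n d : ℕ} (G : GameGraph n d) : PGame ℕ :=
  { evenOwn := fun v => v ∈ G.evenN, start := G.start, edges := G.edges }

/-- The synchronized product `G × A`. -/
def prodGame {n d : ℕ} {Q : Type*} (G : GameGraph n d) (A : Automaton Q) :
    PGame ((ℕ ⊕ Letter) × Q) where
  evenOwn := fun x => match x.1 with
    | Sum.inl v => v ∈ G.evenN
    | Sum.inr _ => True
  start := (Sum.inl G.start, A.init)
  edges := {ed | (∃ e ∈ G.edges, ∃ s : Q, ed = ((Sum.inl e.1, s), 1, (Sum.inr e, s))) ∨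
    (∃ t ∈ A.trans, tLetter t ∈ G.edges ∧
      ed = ((Sum.inr (tLetter t), tSrc t), tPrio t, (Sum.inl (tLetter t).2.2, tTgt t)))}

/-- The number of registers: `rn(n) = 1 + ⌊log₂ n⌋`. -/
def rn (n : ℕ) : ℕ := 1 + Nat.log 2 n

/-- Update of a register state (bottom register first) by priority `p`:
the maximal prefix of registers smaller than `p` is replaced by `p`. -/
def update (p : ℕ) : List ℕ → List ℕ
  | [] => []
  | r :: l => if r < p then p :: update p l else r :: l

/-- The `k`-reset (registers numbered from 1, bottom first): the `k`-th register is
removed and a `1` is inserted at the bottom. -/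
def resetReg (k : ℕ) (l : List ℕ) : List ℕ := 1 :: l.eraseIdx (k - 1)

/-- The value of register number `k` (registers numbered from 1, bottom first). -/
def regVal (k : ℕ) (l : List ℕ) : ℕ := l.getD (k - 1) 0

/-- Lehtinen's register automaton `R_{n,d}`. -/
def Raut (n d : ℕ) : Automaton (List ℕ) where
  init := List.replicate (rn n) 1
  trans := {t | ∃ s e, InAlph n d e ∧
    (t = (s, e, 1, update (prio e) s) ∨
     ∃ k, 1 ≤ k ∧ k ≤ rn n ∧
       ((Even (regVal k (update (prio e) s)) ∧
           t = (s, e, 2 * k, resetReg k (update (prio e) s))) ∨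
        (Odd (regVal k (update (prio e) s)) ∧
           t = (s, e, 2 * k + 1, resetReg k (update (prio e) s)))))}

/-- States of the safety automaton `S_{n,d}`: `none` is the rejecting state `rej`;
otherwise a state of `R_{n,d}` together with a tuple of counters (bottom first:
`c_0` is the head). -/
abbrev SState : Type := Option (List ℕ × List ℕ)

/-- Counters `c_0,…,c_{k-1}` are reset to `c0`; the rest is kept. -/
def bumpKeep (c0 k : ℕ) (c : List ℕ) : List ℕ := List.replicate k c0 ++ c.drop k

/-- Counters `c_0,…,c_{k-1}` are reset to `c0`; counter `c_k` is decremented. -/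
def bumpDec (c0 k : ℕ) (c : List ℕ) : List ℕ :=
  List.replicate k c0 ++ ((c.getD k 0 - 1) :: c.drop (k + 1))

/-- The safety automaton `S_{n,d}`. -/
def Saut (n d : ℕ) : Automaton SState where
  init := some (List.replicate (rn n) 1, List.replicate (rn n + 1) n)
  trans := {t |
    (∃ e, InAlph n d e ∧ t = (none, e, 1, none)) ∨
    (∃ s c e k s', 1 ≤ k ∧ (s, e, 2 * k, s') ∈ (Raut n d).trans ∧
       t = (some (s, c), e, 2, some (s', bumpKeep n k c))) ∨
    (∃ s c e k s', (s, e, 2 * k + 1, s') ∈ (Raut n d).trans ∧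
       ((1 < c.getD k 0 ∧ t = (some (s, c), e, 2, some (s', bumpDec n k c))) ∨
        (c.getD k 0 = 1 ∧ t = (some (s, c), e, 1, none))))}

/-- `bad(ρ) ≤ B` for an infinite run `ρ`: every infix containing no transition of
priority above an odd `p` contains at most `B` transitions of priority `p`. -/
def badLE {Q : Type*} (ρ : ℕ → Trans Q) (B : ℕ) : Prop :=
  ∀ a b p, Odd p → (∀ i, a ≤ i → i < b → tPrio (ρ i) ≤ p) →
    ((Finset.Ico a b).filter fun i => tPrio (ρ i) = p).card ≤ B

/-- `bad(ρ) ≤ B` for a partial run of length `L` (possibly infinite). -/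
def badLEPartial {Q : Type*} (ρ : ℕ → Trans Q) (L : ℕ∞) (B : ℕ) : Prop :=
  ∀ (a b p : ℕ), Odd p → (b : ℕ∞) ≤ L → (∀ i, a ≤ i → i < b → tPrio (ρ i) ≤ p) →
    ((Finset.Ico a b).filter fun i => tPrio (ρ i) = p).card ≤ B

/-- The strategy subgraph `G_τ`: all outgoing edges of Odd's nodes, and only the
chosen edge from each of Even's nodes. -/
def GtauEdges {n d : ℕ} (G : GameGraph n d) (τ : EPosStrat G) : Set Letter :=
  {e | e ∈ G.edges ∧ (e.1 ∈ G.evenN → e = τ.choice e.1)}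

/-- One step along an edge of `E`. -/
def StepRel (E : Set Letter) (u v : ℕ) : Prop := ∃ p, (u, p, v) ∈ E

/-- Reachability along edges of `E`. -/
def Reach (E : Set Letter) : ℕ → ℕ → Prop := Relation.ReflTransGen (StepRel E)

/-- `V_τ`: the nodes of `G_τ` reachable from the starting node. -/
def Vtau {n d : ℕ} (G : GameGraph n d) (τ : EPosStrat G) : Set ℕ :=
  {v | Reach (GtauEdges G τ) G.start v}

/-- `G_{S,p}`: edges of `E` inside `S` of priority at most `p`. -/
def subEdges (E : Set Letter) (S : Set ℕ) (p : ℕ) : Set Letter :=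
  {e | e ∈ E ∧ e.1 ∈ S ∧ e.2.2 ∈ S ∧ prio e ≤ p}

/-- `parts` lists the strongly connected components of the graph `(S, E)` in a
topological order. -/
def IsSCCDecomp (E : Set Letter) (S : Set ℕ) (parts : List (Set ℕ)) : Prop :=
  (∀ P ∈ parts, P.Nonempty ∧ P ⊆ S) ∧
  (∀ v ∈ S, ∃ P ∈ parts, v ∈ P) ∧
  List.Pairwise Disjoint parts ∧
  (∀ P ∈ parts, ∀ u ∈ P, ∀ v ∈ S, ((Reach E u v ∧ Reach E v u) ↔ v ∈ P)) ∧
  (∀ (i j : ℕ) (hi : i < parts.length) (hj : j < parts.length), i < j →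
    ∀ u ∈ parts.get ⟨j, hj⟩, ∀ v ∈ parts.get ⟨i, hi⟩, ¬ StepRel E u v)

/-- The nodes of a tree given by the children function `ch` with root `(r, R)`. -/
inductive TreeNode (ch : ℕ → Set ℕ → List (Set ℕ)) (r : ℕ) (R : Set ℕ) :
    ℕ → Set ℕ → Prop where
  | root : TreeNode ch r R r R
  | child {k : ℕ} {S T : Set ℕ} : TreeNode ch r R (k + 1) S → T ∈ ch (k + 1) S →
      TreeNode ch r R k T

/-- `ch` describes a game tree of `G_τ`: the root is `(⌈d/2⌉, V_τ)`, and the children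
of a node `(k+1, S)` are the SCCs of `G_{S,2(k+1)-1}` in topological order. -/
def IsGameTree {n d : ℕ} (G : GameGraph n d) (τ : EPosStrat G)
    (ch : ℕ → Set ℕ → List (Set ℕ)) : Prop :=
  ∀ k S, TreeNode ch ((d + 1) / 2) (Vtau G τ) (k + 1) S →
    IsSCCDecomp (subEdges (GtauEdges G τ) S (2 * (k + 1) - 1)) S (ch (k + 1) S)

/-- `fstl ch l k S`: the leftmost descendant of the node `(k, S)` on level `l`
(for `l ≤ k`). -/
def fstl (ch : ℕ → Set ℕ → List (Set ℕ)) (l : ℕ) : ℕ → Set ℕ → Set ℕ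
  | 0, S => S
  | k + 1, S => if l = k + 1 then S else fstl ch l k ((ch (k + 1) S).headD ∅)

open Filter

lemma infOft_iff_frequently {f : ℕ → ℕ} {p : ℕ} : InfOft f p ↔ ∃ᶠ k in atTop, f k = p :=
  frequently_atTop.symm

lemma eventually_le_of_forall_infOft_le {f : ℕ → ℕ} {B Q : ℕ} (hB : ∀ t, f t ≤ B)
    (hQ : ∀ q, InfOft f q → q ≤ Q) : ∀ᶠ t in atTop, f t ≤ Q := by
  have hfin : ∀ v ∈ Finset.Ioc Q B, ∀ᶠ t in atTop, f t ≠ v := by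
    intro v hv
    rw [← not_frequently]
    intro hv'
    have := hQ v (infOft_iff_frequently.2 hv')
    simp only [Finset.mem_Ioc] at hv
    omega
  filter_upwards [(eventually_all_finset _).2 hfin] with t ht
  by_contra hlt
  exact ht (f t) (Finset.mem_Ioc.2 ⟨not_le.1 hlt, hB t⟩) rfl

lemma eventually_atTop_of_frequently_of_succ {P : ℕ → Prop} (hfreq : ∃ᶠ t in atTop, P t)
    (hsucc : ∀ᶠ t in atTop, P t → P (t + 1)) : ∀ᶠ t in atTop, P t := by
  obtain ⟨N, hN⟩ := eventually_atTop.1 hsucc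
  obtain ⟨t₀, ht₀, hP⟩ := frequently_atTop.1 hfreq N
  refine eventually_atTop.2 ⟨t₀, fun t ht => ?_⟩
  induction t, ht using Nat.le_induction with
  | base => exact hP
  | succ t ht ih => exact hN t (ht₀.trans ht) ih

section Registers

variable {p a i k : ℕ} {l : List ℕ}

lemma length_update (p : ℕ) (l : List ℕ) : (update p l).length = l.length := by
  induction l with
  | nil => rfl
  | cons r l ih => simp only [update]; split <;> simp [ih]

lemma getD_le_getD_update (p : ℕ) (l : List ℕ) (i : ℕ) :
    l.getD i 0 ≤ (update p l).getD i 0 := by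
  induction l generalizing i with
  | nil => rfl
  | cons r l ih =>
    simp only [update]
    split
    · cases i with
      | zero => exact Nat.le_of_lt ‹r < p›
      | succ i => simpa using ih i
    · rfl

lemma getD_update_le_max (p : ℕ) (l : List ℕ) (i : ℕ) :
    (update p l).getD i 0 ≤ max p (l.getD i 0) := by
  induction l generalizing i with
  | nil => simp [update]
  | cons r l ih =>
    simp only [update]
    split
    · cases i with
      | zero => simp
      | succ i => simpa using ih i
    · simp

lemma le_of_mem_update (hl : l.Pairwise (· ≤ ·)) {x : ℕ} (hx : x ∈ update p l) : p ≤ x := by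
  induction l with
  | nil => simp [update] at hx
  | cons r l ih =>
    obtain ⟨hr, hl⟩ := List.pairwise_cons.1 hl
    simp only [update] at hx
    split at hx
    · rcases List.mem_cons.1 hx with rfl | hx
      · exact le_rfl
      · exact ih hl hx
    · rcases List.mem_cons.1 hx with rfl | hx
      · omega
      · have := hr x hx; omega

lemma pairwise_update (p : ℕ) (hl : l.Pairwise (· ≤ ·)) : (update p l).Pairwise (· ≤ ·) := by
  induction l with
  | nil => exact List.Pairwise.nil
  | cons r l ih =>
    obtain ⟨-, hl'⟩ := List.pairwise_cons.1 hl
    simp only [update]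
    split
    · exact List.pairwise_cons.2 ⟨fun _ => le_of_mem_update hl', ih hl'⟩
    · exact hl

lemma getD_resetReg_succ (k : ℕ) (l : List ℕ) (m : ℕ) :
    (resetReg k l).getD (m + 1) 0 = if m < k - 1 then l.getD m 0 else l.getD (m + 1) 0 := by
  rw [resetReg, List.getD_cons_succ, List.getD_eq_getElem?_getD, List.getElem?_eraseIdx]
  split <;> simp only [List.getD_eq_getElem?_getD]

lemma regVal_resetReg_of_lt (hk : 1 ≤ k) (hki : k < i) :
    regVal i (resetReg k l) = regVal i l := by
  obtain ⟨m, rfl⟩ : ∃ m, i = m + 2 := ⟨i - 2, by omega⟩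
  show (resetReg k l).getD (m + 1) 0 = l.getD (m + 1) 0
  rw [getD_resetReg_succ, if_neg (by omega)]

/-- The registers are kept as a list, bottom register first; `1 :: l` sorted says
`1 ≤ r_1 ≤ r_2 ≤ ⋯`. -/
def IsRegState (n : ℕ) (l : List ℕ) : Prop :=
  l.length = rn n ∧ (1 :: l).Pairwise (· ≤ ·)

lemma isRegState_init (n : ℕ) : IsRegState n (List.replicate (rn n) 1) :=
  ⟨List.length_replicate, by
    rw [← List.replicate_succ]; exact List.pairwise_replicate.2 (Or.inr le_rfl)⟩

lemma IsRegState.update {n : ℕ} (h : IsRegState n l) (ha : 1 ≤ a) :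
    IsRegState n (PGSep.update a l) := by
  have hl := (List.pairwise_cons.1 h.2).2
  refine ⟨(length_update a l).trans h.1, List.pairwise_cons.2 ⟨?_, pairwise_update a hl⟩⟩
  exact fun _ hx => ha.trans (le_of_mem_update hl hx)

lemma IsRegState.resetReg {n : ℕ} (h : IsRegState n l) (hk : 1 ≤ k) (hkn : k ≤ rn n) :
    IsRegState n (PGSep.resetReg k l) := by
  refine ⟨?_, ?_⟩
  · have hlt : k - 1 < l.length := by rw [h.1]; omega
    rw [PGSep.resetReg, List.length_cons, List.length_eraseIdx_of_lt hlt, h.1]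
    omega
  · have h11 : (1 :: 1 :: l).Pairwise (· ≤ ·) :=
      List.pairwise_cons.2 ⟨List.forall_mem_cons.2 ⟨le_rfl, (List.pairwise_cons.1 h.2).1⟩, h.2⟩
    exact h11.sublist (((l.eraseIdx_sublist (k - 1)).cons_cons 1).cons_cons 1)

lemma IsRegState.le_regVal_update {n : ℕ} (h : IsRegState n l) (hk : 1 ≤ k)
    (hkn : k ≤ rn n) : a ≤ regVal k (PGSep.update a l) := by
  have hlt : k - 1 < (PGSep.update a l).length := by rw [length_update, h.1]; omega
  rw [regVal, List.getD_eq_getElem _ _ hlt]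
  exact le_of_mem_update (List.pairwise_cons.1 h.2).2 (List.getElem_mem hlt)

def LowRegsLE (p i : ℕ) (l : List ℕ) : Prop := ∀ m < i, l.getD m 0 ≤ p

lemma LowRegsLE.update (h : LowRegsLE p i l) (ha : a ≤ p) :
    LowRegsLE p i (PGSep.update a l) :=
  fun m hm => (getD_update_le_max a l m).trans (max_le ha (h m hm))

lemma LowRegsLE.resetReg (h : LowRegsLE p i l) (hp : 1 ≤ p) :
    LowRegsLE p i (PGSep.resetReg k l) := by
  rintro (_ | m) hm
  · exact hp
  · rw [getD_resetReg_succ]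
    split
    · exact h m (by omega)
    · exact h (m + 1) hm

lemma LowRegsLE.resetReg_succ (h : LowRegsLE p i l) (hp : 1 ≤ p) (hik : i < k) :
    LowRegsLE p (i + 1) (PGSep.resetReg k l) := by
  rintro (_ | m) hm
  · exact hp
  · rw [getD_resetReg_succ, if_pos (by omega)]
    exact h m (by omega)

end Registers

/-- `R_{n,d}` reads a letter of priority `a` and moves from `s` to `s'`, emitting `π`;
a `k`-reset emits `2k` or `2k + 1` according to the parity of register `k` after the update. -/
def IsRStep (n a : ℕ) (s : List ℕ) (π : ℕ) (s' : List ℕ) : Prop :=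
  π = 1 ∧ s' = update a s ∨
    ∃ k, 1 ≤ k ∧ k ≤ rn n ∧ π = 2 * k + regVal k (update a s) % 2 ∧
      s' = resetReg k (update a s)

lemma isRStep_of_mem_Raut_trans {n d : ℕ} {t : Trans (List ℕ)} (ht : t ∈ (Raut n d).trans) :
    InAlph n d (tLetter t) ∧ IsRStep n (prio (tLetter t)) (tSrc t) (tPrio t) (tTgt t) := by
  obtain ⟨s, e, he, rfl | ⟨k, hk, hkn, ⟨hev, rfl⟩ | ⟨hodd, rfl⟩⟩⟩ := ht
  · exact ⟨he, .inl ⟨rfl, rfl⟩⟩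
  · refine ⟨he, .inr ⟨k, hk, hkn, ?_, rfl⟩⟩
    simp [tPrio, tLetter, tSrc, Nat.even_iff.1 hev]
  · refine ⟨he, .inr ⟨k, hk, hkn, ?_, rfl⟩⟩
    simp [tPrio, tLetter, tSrc, Nat.odd_iff.1 hodd]

namespace IsRStep

variable {n a π k p i : ℕ} {s s' : List ℕ}

lemma isRegState (h : IsRStep n a s π s') (ha : 1 ≤ a) (hs : IsRegState n s) :
    IsRegState n s' := by
  rcases h with ⟨-, rfl⟩ | ⟨k, hk, hkn, -, rfl⟩
  · exact hs.update ha
  · exact (hs.update ha).resetReg hk hkn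

lemma prio_le (h : IsRStep n a s π s') : π ≤ 2 * rn n + 1 := by
  rcases h with ⟨rfl, -⟩ | ⟨k, -, hkn, rfl, -⟩ <;> omega

lemma exists_eq_two_mul_of_even (h : IsRStep n a s π s') (hπ : Even π) :
    ∃ k, 1 ≤ k ∧ k ≤ rn n ∧ π = 2 * k ∧ s' = resetReg k (update a s) := by
  rcases h with ⟨rfl, -⟩ | ⟨k, hk, hkn, rfl, rfl⟩
  · exact absurd hπ Nat.not_even_one
  · refine ⟨k, hk, hkn, ?_, rfl⟩
    rw [Nat.even_add, Nat.even_iff, Nat.even_iff] at hπ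
    omega

lemma lowRegsLE (h : IsRStep n a s π s') (ha : a ≤ p) (hp : 1 ≤ p) (hs : LowRegsLE p i s) :
    LowRegsLE p i s' := by
  rcases h with ⟨-, rfl⟩ | ⟨k, -, -, -, rfl⟩
  · exact hs.update ha
  · exact (hs.update ha).resetReg hp

lemma lowRegsLE_succ (h : IsRStep n a s π s') (ha : a ≤ p) (hp : 1 ≤ p) (hπ : π = 2 * k)
    (hik : i < k) (hs : LowRegsLE p i s) : LowRegsLE p (i + 1) s' := by
  obtain ⟨k', -, -, hk', rfl⟩ := h.exists_eq_two_mul_of_even (hπ ▸ even_two_mul k)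
  exact (hs.update ha).resetReg_succ hp (by omega)

lemma regVal_eq_of_odd (h : IsRStep n a s π s') (hk : 1 ≤ k) (hπ : π ≤ 2 * k)
    (hodd : Odd (regVal k (update a s))) :
    π ≠ 2 * k ∧ regVal k s' = regVal k (update a s) := by
  rw [Nat.odd_iff] at hodd
  rcases h with ⟨rfl, rfl⟩ | ⟨j, hj, -, rfl, rfl⟩
  · exact ⟨by omega, rfl⟩
  · obtain rfl | hjk := eq_or_ne j k
    · omega
    · exact ⟨by omega, regVal_resetReg_of_lt hj (by omega)⟩

end IsRStep

section Eventually

variable {n : ℕ} {s : ℕ → List ℕ} {a π : ℕ → ℕ}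

lemma eventually_lowRegsLE (hstep : ∀ t, IsRStep n (a t) (s t) (π t) (s (t + 1))) {p k : ℕ}
    (hp : 1 ≤ p) (ha : ∀ᶠ t in atTop, a t ≤ p) (hk : ∃ᶠ t in atTop, π t = 2 * k) :
    ∀ i ≤ k, ∀ᶠ t in atTop, LowRegsLE p i (s t) := by
  intro i hik
  induction i with
  | zero => exact .of_forall fun _ _ hm => absurd hm (Nat.not_lt_zero _)
  | succ i ih =>
    refine eventually_atTop_of_frequently_of_succ ?_ ?_
    · refine (tendsto_add_atTop_nat 1).frequently <|
        (hk.and_eventually ((ih (by omega)).and ha)).mono fun t ⟨hπ, hlow, hat⟩ => ?_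
      exact (hstep t).lowRegsLE_succ hat hp hπ (by omega) hlow
    · filter_upwards [ha] with t hat
      exact (hstep t).lowRegsLE hat hp

lemma eventually_regVal_update_eq (hstep : ∀ t, IsRStep n (a t) (s t) (π t) (s (t + 1)))
    (hs : ∀ t, IsRegState n (s t)) {p k : ℕ} (hp : Odd p) (hk : 1 ≤ k) (hkn : k ≤ rn n)
    (ha : ∀ᶠ t in atTop, a t ≤ p) (hπ : ∀ᶠ t in atTop, π t ≤ 2 * k)
    (hap : ∃ᶠ t in atTop, a t = p) (hlow : ∀ᶠ t in atTop, LowRegsLE p k (s t)) :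
    ∀ᶠ t in atTop, regVal k (update (a t) (s t)) = p := by
  have hle : ∀ᶠ t in atTop, regVal k (update (a t) (s t)) ≤ p := by
    filter_upwards [ha, hlow] with t hat hlowt
    exact hlowt.update hat (k - 1) (by omega)
  refine eventually_atTop_of_frequently_of_succ ?_ ?_
  · refine (hap.and_eventually hle).mono fun t ⟨hat, hlet⟩ => ?_
    exact le_antisymm hlet (hat ▸ (hs t).le_regVal_update hk hkn)
  · filter_upwards [hπ, (tendsto_add_atTop_nat 1).eventually hle] with t hπt hlet heq
    have hkeep := ((hstep t).regVal_eq_of_odd hk hπt (heq ▸ hp)).2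
    refine le_antisymm hlet ?_
    calc p = regVal k (s (t + 1)) := by rw [hkeep, heq]
      _ ≤ regVal k (update (a (t + 1)) (s (t + 1))) := getD_le_getD_update _ _ _

theorem not_maxInfOftEven_of_isRStep (hstep : ∀ t, IsRStep n (a t) (s t) (π t) (s (t + 1)))
    (hs : ∀ t, IsRegState n (s t)) {B : ℕ} (hB : ∀ t, a t ≤ B) (hodd : MaxInfOftOdd a) :
    ¬ MaxInfOftEven π := by
  rintro ⟨q, hq, hqinf, hqmax⟩
  obtain ⟨p, hp, hpinf, hpmax⟩ := hodd
  rw [infOft_iff_frequently] at hqinf hpinf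
  obtain ⟨t, rfl⟩ := hqinf.exists
  obtain ⟨k, hk, hkn, hπk, -⟩ := (hstep t).exists_eq_two_mul_of_even hq
  rw [hπk] at hqinf hqmax
  have ha := eventually_le_of_forall_infOft_le hB hpmax
  have hπ := eventually_le_of_forall_infOft_le (fun t => (hstep t).prio_le) hqmax
  have hlow := eventually_lowRegsLE hstep hp.pos ha hqinf k le_rfl
  have hreg := eventually_regVal_update_eq hstep hs hp hk hkn ha hπ hpinf hlow
  refine hqinf ?_
  filter_upwards [hπ, hreg] with t hπt hregt
  exact ((hstep t).regVal_eq_of_odd hk hπt (hregt ▸ hp)).1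

end Eventually

section Run

variable {n d : ℕ} {ρ : ℕ → Trans (List ℕ)} {w : Word}

lemma IsRun.isRStep (hρ : IsRun (Raut n d) ρ) (hr : Reads ρ w) (t : ℕ) :
    InAlph n d (w t) ∧
      IsRStep n (prio (w t)) (tSrc (ρ t)) (tPrio (ρ t)) (tSrc (ρ (t + 1))) := by
  rw [← hr t, ← (hρ.2 t).2]
  exact isRStep_of_mem_Raut_trans (hρ.2 t).1

lemma IsRun.isRegState (hρ : IsRun (Raut n d) ρ) (hr : Reads ρ w) (t : ℕ) :
    IsRegState n (tSrc (ρ t)) := by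
  induction t with
  | zero => rw [hρ.1]; exact isRegState_init n
  | succ t ih =>
    obtain ⟨hw, hstep⟩ := hρ.isRStep hr t
    exact hstep.isRegState hw.2.2.1 ih

end Run

theorem Raut_rejects_limsupOdd_general (n d : ℕ)
    (w : Word) (hodd : LimsupOdd w)
    (ρ : ℕ → Trans (List ℕ)) (hρ : IsRun (Raut n d) ρ) (hr : Reads ρ w) :
    ¬ Accepting ρ :=
  not_maxInfOftEven_of_isRStep (fun t => (hρ.isRStep hr t).2) (hρ.isRegState hr)
    (fun t => (hρ.isRStep hr t).1.2.2.2.1) hodd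

/-- `R_{n,d}` rejects all words of `LimsupOdd_{n,d}`: every run
reading such a word is rejecting. -/
theorem Raut_rejects_limsupOdd (n d : ℕ) (hn : 1 ≤ n) (hd : 0 < d) (hde : Even d)
    (w : Word) (hw : ∀ k, InAlph n d (w k)) (hodd : LimsupOdd w)
    (ρ : ℕ → Trans (List ℕ)) (hρ : IsRun (Raut n d) ρ) (hr : Reads ρ w) :
    ¬ Accepting ρ :=
  Raut_rejects_limsupOdd_general n d w hodd ρ hρ hr

end PGSep
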